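/- Let A, B be positive definite d×d matrices, M invertible, ε > 0, and C_ε = [((A M B Mᵀ + (ε²/4)I)^{1/2}) − (ε/2)I](Mᵀ)^{-1}, where the square root is A^{1/2}(A^{1/2} M B Mᵀ A^{1/2} + (ε²/4)I)^{1/2} A^{-1/2}. Then B − C_εᵀ A^{-1} C_ε = ε M^{-1} A^{-1}[(A M B Mᵀ + (ε²/4)I)^{1/2} − (ε/2)I](Mᵀ)^{-1}. -/

import Mathlib

open Matrix

open Classical in
/-- The positive semidefinite square root (zero if not positive semidefinite). -/
noncomputable def psqrt {d : ℕ} (X : Matrix (Fin d) (Fin d) ℝ) : Matrix (Fin d) (Fin d) ℝ :=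
  if h : X.PosSemidef then
    (h.1.eigenvectorUnitary : Matrix (Fin d) (Fin d) ℝ) *
      diagonal ((↑) ∘ (√·) ∘ h.1.eigenvalues) *
      (star h.1.eigenvectorUnitary : Matrix (Fin d) (Fin d) ℝ)
  else 0

/-!
Write `S = A^{1/2}`, `R` for the square root of `S M B Mᵀ S + (ε/2)² I` and `E = R - (ε/2) I`.
Then `K - (ε/2) I = S E S⁻¹`, so `Cᵀ A⁻¹ C = M⁻¹ S⁻¹ E² S⁻¹ M⁻ᵀ` by symmetry of `S` and `R`.
Completing the square, `E² = S M B Mᵀ S - ε E`, which turns `Cᵀ A⁻¹ C` into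
`B - ε M⁻¹ S⁻¹ E S⁻¹ M⁻ᵀ = B - ε M⁻¹ A⁻¹ (K - (ε/2) I) M⁻ᵀ`.
-/

theorem sub_smul_one_mul_self_eq {𝕜 α : Type*} [CommRing 𝕜] [Ring α] [Algebra 𝕜 α]
    {R X : α} {c : 𝕜} (hR : R * R = X + c ^ 2 • 1) :
    (R - c • 1) * (R - c • 1) = X - (2 * c) • (R - c • 1) := by
  simp only [sub_mul, mul_sub, smul_mul_assoc, mul_smul_comm, one_mul, mul_one, hR]
  module

section riccati

variable {n 𝕜 : Type*} [Fintype n] [DecidableEq n] [Field 𝕜] [NeZero (2 : 𝕜)]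

theorem sub_transpose_mul_inv_mul_eq_smul {A B M S R K C : Matrix n n 𝕜} {ε : 𝕜}
    (hM : IsUnit M.det) (hS : IsUnit S.det) (hSt : Sᵀ = S) (hSA : S * S = A) (hRt : Rᵀ = R)
    (hR : R * R = S * (M * B * Mᵀ) * S + (ε ^ 2 / 4) • 1)
    (hK : K = S * R * S⁻¹) (hC : C = (K - (ε / 2) • 1) * (Mᵀ)⁻¹) :
    B - Cᵀ * A⁻¹ * C = ε • (M⁻¹ * A⁻¹ * (K - (ε / 2) • 1) * (Mᵀ)⁻¹) := by
  set E := R - (ε / 2) • 1 with hE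
  have hMt : IsUnit Mᵀ.det := by rwa [det_transpose]
  have hKE : K - (ε / 2) • 1 = S * E * S⁻¹ := by
    rw [hK, hE, Matrix.mul_sub, Matrix.sub_mul, Matrix.mul_smul, Matrix.smul_mul, Matrix.mul_one,
      mul_nonsing_inv S hS]
  have hCt : Cᵀ = M⁻¹ * (S⁻¹ * E * S) := by
    rw [hC, hKE, transpose_mul, transpose_nonsing_inv, transpose_transpose, transpose_mul,
      transpose_mul, transpose_nonsing_inv, hSt, hE, transpose_sub, transpose_smul, transpose_one,
      hRt, Matrix.mul_assoc]
  have hAinv : A⁻¹ = S⁻¹ * S⁻¹ := by rw [← hSA, Matrix.mul_inv_rev]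
  have hEE : E * E = S * (M * B * Mᵀ) * S - ε • E := by
    have := sub_smul_one_mul_self_eq (c := ε / 2)
      (by rwa [div_pow, show (2 : 𝕜) ^ 2 = 4 by norm_num])
    rwa [mul_div_cancel₀ ε two_ne_zero] at this
  calc B - Cᵀ * A⁻¹ * C = B - M⁻¹ * (S⁻¹ * ((E * E) * (S⁻¹ * (Mᵀ)⁻¹))) := by
        rw [hCt, hAinv, hC, hKE]
        simp only [Matrix.mul_assoc, nonsing_inv_mul_cancel_left _ _ hS,
          mul_nonsing_inv_cancel_left _ _ hS]
    _ = ε • (M⁻¹ * (S⁻¹ * (E * (S⁻¹ * (Mᵀ)⁻¹)))) := by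
        rw [hEE]
        simp only [Matrix.sub_mul, Matrix.mul_sub, Matrix.mul_assoc, Matrix.smul_mul,
          Matrix.mul_smul, nonsing_inv_mul_cancel_left _ _ hS, mul_nonsing_inv_cancel_left _ _ hS,
          nonsing_inv_mul_cancel_left _ _ hM, Matrix.mul_nonsing_inv _ hMt, Matrix.mul_one]
        abel
    _ = ε • (M⁻¹ * A⁻¹ * (K - (ε / 2) • 1) * (Mᵀ)⁻¹) := by
        rw [hAinv, hKE]
        simp only [Matrix.mul_assoc, nonsing_inv_mul_cancel_left _ _ hS]

end riccati

section psqrt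

variable {d : ℕ}

theorem psqrt_of_posSemidef {X : Matrix (Fin d) (Fin d) ℝ} (h : X.PosSemidef) :
    psqrt X = (h.1.eigenvectorUnitary : Matrix (Fin d) (Fin d) ℝ) *
      diagonal ((↑) ∘ (√·) ∘ h.1.eigenvalues) *
      (star h.1.eigenvectorUnitary : Matrix (Fin d) (Fin d) ℝ) := by
  rw [psqrt, dif_pos h]

theorem psqrt_mul_self {X : Matrix (Fin d) (Fin d) ℝ} (h : X.PosSemidef) :
    psqrt X * psqrt X = X := by
  have hUU : (star h.1.eigenvectorUnitary : Matrix (Fin d) (Fin d) ℝ) *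
      h.1.eigenvectorUnitary = 1 := Unitary.coe_star_mul_self _
  have hD : diagonal ((↑) ∘ (√·) ∘ h.1.eigenvalues) *
      diagonal ((↑) ∘ (√·) ∘ h.1.eigenvalues) =
      diagonal (RCLike.ofReal ∘ h.1.eigenvalues : Fin d → ℝ) := by
    rw [diagonal_mul_diagonal]
    congr 1 with i
    simp [Real.mul_self_sqrt (h.eigenvalues_nonneg i)]
  have hX := h.1.spectral_theorem
  rw [Unitary.conjStarAlgAut_apply] at hX
  conv_rhs => rw [hX]
  rw [psqrt_of_posSemidef h]
  simp only [Matrix.mul_assoc]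
  rw [← Matrix.mul_assoc (star _ : Matrix (Fin d) (Fin d) ℝ), hUU, Matrix.one_mul,
    ← Matrix.mul_assoc (diagonal _), hD]

theorem posSemidef_psqrt (X : Matrix (Fin d) (Fin d) ℝ) : (psqrt X).PosSemidef := by
  by_cases h : X.PosSemidef
  · have hD : (diagonal ((↑) ∘ (√·) ∘ h.1.eigenvalues) : Matrix (Fin d) (Fin d) ℝ).PosSemidef :=
      posSemidef_diagonal_iff.mpr fun i => by simp [Real.sqrt_nonneg]
    rw [psqrt_of_posSemidef h, star_eq_conjTranspose]
    exact hD.mul_mul_conjTranspose_same _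
  · rw [psqrt, dif_neg h]
    exact .zero

theorem transpose_psqrt (X : Matrix (Fin d) (Fin d) ℝ) : (psqrt X)ᵀ = psqrt X := by
  rw [← conjTranspose_eq_transpose_of_trivial]
  exact (posSemidef_psqrt X).isHermitian

theorem isUnit_det_psqrt {A : Matrix (Fin d) (Fin d) ℝ} (hA : A.PosDef) :
    IsUnit (psqrt A).det := by
  have hdet : (psqrt A).det * (psqrt A).det = A.det := by
    rw [← det_mul, psqrt_mul_self hA.posSemidef]
  exact isUnit_iff_ne_zero.mpr fun h0 => hA.det_pos.ne' (by rw [← hdet, h0, zero_mul])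

end psqrt

theorem stmt11_general {d : ℕ} (A B M : Matrix (Fin d) (Fin d) ℝ) (hA : A.PosDef) (hB : B.PosDef)
    (hM : IsUnit M.det) (ε : ℝ)
    (K C : Matrix (Fin d) (Fin d) ℝ)
    (hK : K = psqrt A * psqrt (psqrt A * (M * B * Mᵀ) * psqrt A + (ε ^ 2 / 4) • 1) *
          (psqrt A)⁻¹)
    (hC : C = (K - (ε / 2) • 1) * (Mᵀ)⁻¹) :
    B - Cᵀ * A⁻¹ * C = ε • (M⁻¹ * A⁻¹ * (K - (ε / 2) • 1) * (Mᵀ)⁻¹) := by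
  have hInner : (psqrt A * (M * B * Mᵀ) * psqrt A + (ε ^ 2 / 4) • 1).PosSemidef := by
    have hMBM : (M * B * Mᵀ).PosSemidef := by
      simpa [conjTranspose_eq_transpose_of_trivial, Matrix.mul_assoc] using
        hB.posSemidef.mul_mul_conjTranspose_same M
    have hSMBMS := hMBM.mul_mul_conjTranspose_same (psqrt A)
    rw [conjTranspose_eq_transpose_of_trivial, transpose_psqrt] at hSMBMS
    exact hSMBMS.add (PosSemidef.one.smul (by positivity))
  exact sub_transpose_mul_inv_mul_eq_smul hM (isUnit_det_psqrt hA) (transpose_psqrt A)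
    (psqrt_mul_self hA.posSemidef) (transpose_psqrt _) (psqrt_mul_self hInner) hK hC

theorem stmt11 {d : ℕ} (A B M : Matrix (Fin d) (Fin d) ℝ) (hA : A.PosDef) (hB : B.PosDef)
    (hM : IsUnit M.det) (ε : ℝ) (hε : 0 < ε)
    (K C : Matrix (Fin d) (Fin d) ℝ)
    (hK : K = psqrt A * psqrt (psqrt A * (M * B * Mᵀ) * psqrt A + (ε ^ 2 / 4) • 1) *
          (psqrt A)⁻¹)
    (hC : C = (K - (ε / 2) • 1) * (Mᵀ)⁻¹) :
    B - Cᵀ * A⁻¹ * C = ε • (M⁻¹ * A⁻¹ * (K - (ε / 2) • 1) * (Mᵀ)⁻¹) :=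
  stmt11_general A B M hA hB hM ε K C hK hC
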